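/- In G(n,p) with p = Δ/n and Δ a sufficiently large constant, with probability 1 - o(n^{-1/2}) the minimum size α₁ of a maximal independent set satisfies α₁(G(n,p)) ≥ (log Δ - 3 log log Δ)·n/Δ. -/

import Mathlib

/-!
A maximal independent set is dominating, and a dominating set of size at most `K` extends to
one of size exactly `K`. A fixed `K`-set dominates its complement with probability
`(1 - (1 - p) ^ K) ^ (n - K)`, since the vertices outside it are dominated independently, so by
the union bound `ℙ(α₁ ≤ K) ≤ C(n, K) (1 - (1 - p) ^ K) ^ (n - K)
≤ exp (K log (e n / K) - (1 - p) ^ K (n - K))`. For `K = ⌈M n / Δ⌉` with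
`M = log Δ - 3 log log Δ` one has `(1 - p) ^ K ≥ e ^ {-(M + 1)} = (log Δ) ^ 3 / (e Δ)`, which
beats `K log (e n / K) = O((log Δ) ^ 2 n / Δ)`: the probability is exponentially small in `n`.
-/

open MeasureTheory

/-- The binomial random graph `G(n,p)`, encoded as the product Bernoulli measure on the
indicators of the potential edges. -/
noncomputable def gnp (n : ℕ) (p : ENNReal) (hp : p ≤ 1) :
    Measure ({e : Fin n × Fin n // e.1 < e.2} → Bool) :=
  Measure.pi fun _ => (PMF.bernoulli p.toNNReal (by simpa using ENNReal.toNNReal_mono ENNReal.one_ne_top hp)).toMeasure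

/-- The adjacency relation of the sample `ω`. -/
def adjOf {n : ℕ} (ω : {e : Fin n × Fin n // e.1 < e.2} → Bool) (u v : Fin n) : Prop :=
  (∃ h : u < v, ω ⟨(u, v), h⟩ = true) ∨ (∃ h : v < u, ω ⟨(v, u), h⟩ = true)


open ProbabilityTheory Finset

abbrev PotentialEdge (n : ℕ) := {e : Fin n × Fin n // e.1 < e.2}

namespace PotentialEdge

variable {n : ℕ}

def ofNe (u v : Fin n) (h : u ≠ v) : PotentialEdge n :=
  if huv : u < v then ⟨(u, v), huv⟩ else ⟨(v, u), h.symm.lt_of_le (not_lt.mp huv)⟩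

lemma ofNe_fst_eq_or_snd_eq {u v w : Fin n} (h : u ≠ v) :
    (ofNe u v h).1.1 = w ∨ (ofNe u v h).1.2 = w ↔ u = w ∨ v = w := by
  unfold ofNe
  split <;> simp [or_comm]

lemma ofNe_left_cancel {u u' v : Fin n} (h : u ≠ v) (h' : u' ≠ v)
    (he : ofNe u v h = ofNe u' v h') : u = u' := by
  have hu := (ofNe_fst_eq_or_snd_eq (w := u) h).2 (Or.inl rfl)
  rw [he, ofNe_fst_eq_or_snd_eq] at hu
  exact (hu.resolve_right h.symm).symm

end PotentialEdge

open PotentialEdge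

variable {n : ℕ}

lemma adjOf_iff_ofNe {ω : PotentialEdge n → Bool} {u v : Fin n} (h : u ≠ v) :
    adjOf ω u v ↔ ω (ofNe u v h) = true := by
  unfold adjOf ofNe
  rcases h.lt_or_gt with huv | hvu
  · simp [huv, huv.not_gt]
  · simp [hvu, hvu.not_gt]

def Dominates (ω : PotentialEdge n → Bool) (I : Finset (Fin n)) : Prop :=
  ∀ v : Fin n, v ∉ I → ∃ u ∈ I, adjOf ω u v

lemma Dominates.mono {ω : PotentialEdge n → Bool} {I J : Finset (Fin n)} (hI : Dominates ω I)
    (hIJ : I ⊆ J) : Dominates ω J := fun v hv =>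
  (hI v fun h => hv (hIJ h)).imp fun _ ⟨hu, hadj⟩ => ⟨hIJ hu, hadj⟩

lemma MeasureTheory.Measure.pi_inter_eq_mul_of_determined {ι α : Type*} [Fintype ι]
    [DecidableEq ι] [MeasurableSpace α] [Countable α] [MeasurableSingletonClass α]
    {μ : ι → Measure α} [∀ i, IsProbabilityMeasure (μ i)] (S : Finset ι) {A B : Set (ι → α)}
    (hA : ∀ ω ω' : ι → α, (∀ i ∈ S, ω i = ω' i) → ω ∈ A → ω' ∈ A)
    (hB : ∀ ω ω' : ι → α, (∀ i ∉ S, ω i = ω' i) → ω ∈ B → ω' ∈ B) :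
    Measure.pi μ (A ∩ B) = Measure.pi μ A * Measure.pi μ B := by
  have hind := (iIndepFun_pi (μ := μ) (X := fun _ => id) fun _ => aemeasurable_id).indepFun_finset
    S Sᶜ disjoint_compl_right fun i => measurable_pi_apply i
  set f := fun (ω : ι → α) (i : S) => ω i
  set g := fun (ω : ι → α) (i : (Sᶜ : Finset ι)) => ω i
  have hA' : A = f ⁻¹' (f '' A) := by
    refine (Set.subset_preimage_image f A).antisymm ?_
    rintro ω ⟨ω', hω', hf⟩
    exact hA ω' ω (fun i hi => congrFun hf ⟨i, hi⟩) hω'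
  have hB' : B = g ⁻¹' (g '' B) := by
    refine (Set.subset_preimage_image g B).antisymm ?_
    rintro ω ⟨ω', hω', hg⟩
    exact hB ω' ω (fun i hi => congrFun hg ⟨i, mem_compl.2 hi⟩) hω'
  rw [hA', hB']
  exact hind.measure_inter_preimage_eq_mul _ _ (Set.to_countable _).measurableSet
    (Set.to_countable _).measurableSet

section Gnp

variable {p : ENNReal} (hp : p ≤ 1)

instance : IsProbabilityMeasure (gnp n p hp) := by unfold gnp; infer_instance

lemma gnp_forall_mem_eq_false (S : Finset (PotentialEdge n)) :
    gnp n p hp {ω | ∀ e ∈ S, ω e = false} = (1 - p) ^ #S := by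
  have hset : {ω : PotentialEdge n → Bool | ∀ e ∈ S, ω e = false} =
      (S : Set (PotentialEdge n)).pi fun _ => {false} := by
    ext ω; simp
  rw [hset, gnp, Measure.pi_pi_finset, prod_const,
    PMF.toMeasure_apply_singleton _ _ (measurableSet_singleton _)]
  simp [PMF.bernoulli, ENNReal.coe_toNNReal (ne_top_of_le_ne_top ENNReal.one_ne_top hp)]

lemma gnp_exists_adjOf {I : Finset (Fin n)} {v : Fin n} (hv : v ∉ I) :
    gnp n p hp {ω | ∃ u ∈ I, adjOf ω u v} = 1 - (1 - p) ^ #I := by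
  have hne : ∀ u ∈ I, u ≠ v := fun u hu h => hv (h ▸ hu)
  set S := I.attach.image fun u => ofNe u.1 v (hne u.1 u.2)
  have hS : #S = #I := by
    rw [card_image_of_injective _ fun a b hab => Subtype.ext (ofNe_left_cancel _ _ hab),
      card_attach]
  have hcompl : {ω : PotentialEdge n → Bool | ∃ u ∈ I, adjOf ω u v} =
      {ω | ∀ e ∈ S, ω e = false}ᶜ := by
    ext ω
    simp only [Set.mem_ofPred_eq, Set.mem_compl_iff, not_forall, Bool.not_eq_false, S,
      mem_image, mem_attach, true_and, exists_prop]
    constructor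
    · rintro ⟨u, hu, hadj⟩
      exact ⟨_, ⟨⟨u, hu⟩, rfl⟩, (adjOf_iff_ofNe (hne u hu)).1 hadj⟩
    · rintro ⟨_, ⟨⟨u, hu⟩, rfl⟩, he⟩
      exact ⟨u, hu, (adjOf_iff_ofNe (hne u hu)).2 he⟩
  rw [hcompl, prob_compl_eq_one_sub (Set.to_countable _).measurableSet,
    gnp_forall_mem_eq_false, hS]

lemma gnp_forall_mem_exists_adjOf {I T : Finset (Fin n)} (hIT : Disjoint I T) :
    gnp n p hp {ω | ∀ v ∈ T, ∃ u ∈ I, adjOf ω u v} = (1 - (1 - p) ^ #I) ^ #T := by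
  induction T using Finset.induction_on with
  | empty => simp
  | @insert v T hvT ih =>
    have hvI : v ∉ I := disjoint_right.1 hIT (mem_insert_self v T)
    have hIT' : Disjoint I T := hIT.mono_right (subset_insert v T)
    have hsplit : {ω : PotentialEdge n → Bool | ∀ w ∈ insert v T, ∃ u ∈ I, adjOf ω u w} =
        {ω | ∃ u ∈ I, adjOf ω u v} ∩ {ω | ∀ w ∈ T, ∃ u ∈ I, adjOf ω u w} := by
      ext ω; simp
    -- the two events are determined by the edges at `v` and by the edges avoiding `v`
    have hindep : gnp n p hp ({ω | ∃ u ∈ I, adjOf ω u v} ∩ {ω | ∀ w ∈ T, ∃ u ∈ I, adjOf ω u w}) =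
        gnp n p hp {ω | ∃ u ∈ I, adjOf ω u v} * gnp n p hp {ω | ∀ w ∈ T, ∃ u ∈ I, adjOf ω u w} :=
      Measure.pi_inter_eq_mul_of_determined
        (univ.filter fun e : PotentialEdge n => e.1.1 = v ∨ e.1.2 = v) ?_ ?_
    · rw [hsplit, hindep, gnp_exists_adjOf hp hvI, ih hIT', card_insert_of_notMem hvT, pow_succ']
    · rintro ω ω' hωω' ⟨u, hu, hadj⟩
      have huv : u ≠ v := fun h => hvI (h ▸ hu)
      refine ⟨u, hu, ?_⟩
      rw [adjOf_iff_ofNe huv] at hadj ⊢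
      rwa [← hωω' _ (by simp [ofNe_fst_eq_or_snd_eq])]
    · intro ω ω' hωω' hω w hw
      obtain ⟨u, hu, hadj⟩ := hω w hw
      have huw : u ≠ w := fun h => disjoint_left.1 hIT' hu (h ▸ hw)
      refine ⟨u, hu, ?_⟩
      rw [adjOf_iff_ofNe huw] at hadj ⊢
      rwa [← hωω' _ ?_]
      simp only [mem_filter, mem_univ, true_and, ofNe_fst_eq_or_snd_eq]
      rintro (rfl | rfl)
      exacts [hvI hu, hvT hw]

lemma gnp_dominates (I : Finset (Fin n)) :
    gnp n p hp {ω | Dominates ω I} = (1 - (1 - p) ^ #I) ^ (n - #I) := by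
  have hset : {ω | Dominates ω I} = {ω | ∀ v ∈ Iᶜ, ∃ u ∈ I, adjOf ω u v} := by
    ext ω; simp [Dominates]
  rw [hset, gnp_forall_mem_exists_adjOf hp disjoint_compl_right, card_compl, Fintype.card_fin]

lemma gnp_exists_dominates_card_le {K : ℕ} (hK : K ≤ n) :
    gnp n p hp {ω | ∃ I : Finset (Fin n), Dominates ω I ∧ #I ≤ K} ≤
      n.choose K * (1 - (1 - p) ^ K) ^ (n - K) := by
  have hsub : {ω | ∃ I : Finset (Fin n), Dominates ω I ∧ #I ≤ K} ⊆
      ⋃ J ∈ powersetCard K (univ : Finset (Fin n)), {ω | Dominates ω J} := by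
    rintro ω ⟨I, hI, hIK⟩
    obtain ⟨J, hIJ, -, hJ⟩ := exists_subsuperset_card_eq (subset_univ I) hIK (by simpa using hK)
    exact Set.mem_biUnion (mem_powersetCard.2 ⟨subset_univ J, hJ⟩) (hI.mono hIJ)
  calc gnp n p hp {ω | ∃ I : Finset (Fin n), Dominates ω I ∧ #I ≤ K}
      ≤ ∑ J ∈ powersetCard K (univ : Finset (Fin n)), gnp n p hp {ω | Dominates ω J} :=
        (measure_mono hsub).trans (measure_biUnion_finset_le _ _)
    _ = n.choose K * (1 - (1 - p) ^ K) ^ (n - K) := by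
        rw [sum_congr rfl fun J hJ => by rw [gnp_dominates, (mem_powersetCard.1 hJ).2],
          sum_const, card_powersetCard, card_univ, Fintype.card_fin, nsmul_eq_mul]

end Gnp

lemma gnp_not_forall_le_card_toReal_le {x b : ℝ} (hx0 : 0 ≤ x) (hx1 : x ≤ 1) (hb : ⌈b⌉₊ ≤ n) :
    (gnp n (min 1 (ENNReal.ofReal x)) (min_le_left _ _)
      {ω | ¬ ∀ I : Finset (Fin n), ((∀ u ∈ I, ∀ v ∈ I, ¬ adjOf ω u v) ∧ Dominates ω I) →
        b ≤ (#I : ℝ)}).toReal ≤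
      n.choose ⌈b⌉₊ * (1 - (1 - x) ^ ⌈b⌉₊) ^ (n - ⌈b⌉₊) := by
  have hsub : {ω | ¬ ∀ I : Finset (Fin n), ((∀ u ∈ I, ∀ v ∈ I, ¬ adjOf ω u v) ∧ Dominates ω I) →
      b ≤ (#I : ℝ)} ⊆ {ω | ∃ I : Finset (Fin n), Dominates ω I ∧ #I ≤ ⌈b⌉₊} := by
    intro ω hω
    simp only [not_forall, not_le, exists_prop] at hω
    obtain ⟨I, ⟨-, hI⟩, hIb⟩ := hω
    exact ⟨I, hI, Nat.cast_le.1 (hIb.le.trans (Nat.le_ceil b))⟩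
  have hx : min 1 (ENNReal.ofReal x) = ENNReal.ofReal x :=
    min_eq_right (ENNReal.ofReal_le_one.2 hx1)
  have h1x : (0 : ℝ) ≤ 1 - x := by linarith
  have hpow : (1 - x) ^ ⌈b⌉₊ ≤ 1 := pow_le_one₀ h1x (by linarith)
  refine ENNReal.toReal_le_of_le_ofReal (by positivity)
    ((measure_mono hsub).trans ((gnp_exists_dominates_card_le _ hb).trans_eq ?_))
  rw [hx, ← ENNReal.ofReal_one, ← ENNReal.ofReal_sub _ hx0, ← ENNReal.ofReal_pow h1x,
    ← ENNReal.ofReal_sub _ (pow_nonneg h1x _), ← ENNReal.ofReal_pow (by linarith),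
    ← ENNReal.ofReal_natCast, ← ENNReal.ofReal_mul (Nat.cast_nonneg _)]

open Real

lemma Nat.choose_le_exp_one_mul_div_pow (n K : ℕ) :
    (n.choose K : ℝ) ≤ (exp 1 * n / K) ^ K := by
  rcases K.eq_zero_or_pos with rfl | hK
  · simp
  have hKpos : (0 : ℝ) < K := Nat.cast_pos.2 hK
  -- `K ^ K / K! ≤ exp K` is one term of the exponential series
  have hfac : (K : ℝ) ^ K ≤ K.factorial * exp 1 ^ K := by
    rw [← exp_nat_mul, mul_one, mul_comm, ← div_le_iff₀ (by positivity)]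
    exact pow_div_factorial_le_exp _ hKpos.le K
  calc (n.choose K : ℝ) ≤ (n : ℝ) ^ K / K.factorial := Nat.choose_le_pow_div K n
    _ = ((n : ℝ) ^ K / K ^ K) * (K ^ K / K.factorial) := by field_simp
    _ ≤ ((n : ℝ) ^ K / K ^ K) * exp 1 ^ K := by
        gcongr
        rwa [div_le_iff₀ (by positivity), mul_comm]
    _ = (exp 1 * n / K) ^ K := by rw [div_pow, mul_pow]; ring

lemma exp_neg_le_one_sub_pow {x a : ℝ} {K : ℕ} (hx1 : x < 1)
    (h : K * x ≤ a * (1 - x)) : exp (-a) ≤ (1 - x) ^ K := by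
  have h1x : 0 < 1 - x := by linarith
  have hlog : -(x / (1 - x)) ≤ log (1 - x) := by
    have := one_sub_inv_le_log_of_pos h1x
    rwa [show 1 - (1 - x)⁻¹ = -(x / (1 - x)) by field_simp; ring] at this
  rw [← exp_log (pow_pos h1x K), exp_le_exp, log_pow]
  have hKx : K * (x / (1 - x)) ≤ a := by rwa [mul_div_assoc', div_le_iff₀ h1x]
  nlinarith [mul_le_mul_of_nonneg_left hlog (Nat.cast_nonneg (α := ℝ) K)]

lemma choose_mul_one_sub_pow_pow_le_exp {n K : ℕ} (hK : 0 < K) (hKn : K ≤ n) {x q : ℝ}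
    (hx0 : 0 ≤ x) (hx1 : x ≤ 1) (hq : q ≤ (1 - x) ^ K) :
    (n.choose K : ℝ) * (1 - (1 - x) ^ K) ^ (n - K) ≤
      exp (K * log (exp 1 * n / K) - q * (n - K : ℕ)) := by
  have hpos : 0 < exp 1 * n / K := by
    have : (0 : ℝ) < n := Nat.cast_pos.2 (hK.trans_le hKn)
    positivity
  have hy0 : 0 ≤ 1 - (1 - x) ^ K := sub_nonneg.2 (pow_le_one₀ (by linarith) (by linarith))
  rw [sub_eq_add_neg (K * log _), exp_add]
  gcongr
  · exact (Nat.choose_le_exp_one_mul_div_pow n K).trans_eq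
      (by rw [← exp_log hpos, ← exp_nat_mul, log_exp])
  · calc (1 - (1 - x) ^ K) ^ (n - K) ≤ exp (-(1 - x) ^ K) ^ (n - K) := by
          gcongr; exact one_sub_le_exp_neg _
      _ = exp (-((1 - x) ^ K * (n - K : ℕ))) := by rw [← exp_nat_mul]; ring_nf
      _ ≤ exp (-(q * (n - K : ℕ))) := by gcongr

noncomputable def firstMomentRate (Δ M : ℝ) : ℝ :=
  exp (-(M + 1)) / 2 - 2 * M * (1 + log (Δ / M)) / Δ

lemma ceil_mul_div_bounds {Δ M : ℝ} (hM : 1 ≤ M) (hMΔ : 4 * M ≤ Δ) (hn : Δ * (M + 2) ≤ n) :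
    M * n / Δ ≤ ⌈M * n / Δ⌉₊ ∧ (⌈M * n / Δ⌉₊ : ℝ) ≤ 2 * (M * n / Δ) ∧
      (⌈M * n / Δ⌉₊ : ℝ) ≤ n / 2 ∧ (⌈M * n / Δ⌉₊ : ℝ) * (Δ / n) ≤ (M + 1) * (1 - Δ / n) := by
  have hΔ : 0 < Δ := by linarith
  have hn0 : (0 : ℝ) < n := by nlinarith
  have hb1 : 1 ≤ M * n / Δ := by rw [le_div_iff₀ hΔ]; nlinarith
  have hK := Nat.ceil_lt_add_one (by linarith : 0 ≤ M * n / Δ)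
  have hbn : M * n / Δ ≤ n / 4 := by
    rw [div_le_div_iff₀ hΔ (by norm_num)]; nlinarith
  have hx : (M + 2) * (Δ / n) ≤ 1 := by rw [mul_div_assoc', div_le_one hn0]; linarith
  have hbx : M * n / Δ * (Δ / n) = M := by field_simp
  refine ⟨Nat.le_ceil _, by linarith, by linarith, ?_⟩
  nlinarith [mul_le_mul_of_nonneg_right hK.le (by positivity : 0 ≤ Δ / n)]

lemma choose_ceil_mul_div_le_exp {Δ M : ℝ} (hM : 1 ≤ M) (hMΔ : 4 * M ≤ Δ)
    (hn : Δ * (M + 2) ≤ n) :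
    (n.choose ⌈M * n / Δ⌉₊ : ℝ) * (1 - (1 - Δ / n) ^ ⌈M * n / Δ⌉₊) ^ (n - ⌈M * n / Δ⌉₊) ≤
      exp (-firstMomentRate Δ M * n) := by
  obtain ⟨hbK, hK2b, hKn, hKx⟩ := ceil_mul_div_bounds hM hMΔ hn
  set K := ⌈M * n / Δ⌉₊
  have hΔ : 0 < Δ := by linarith
  have hn0 : (0 : ℝ) < n := by nlinarith
  have hb : 0 < M * n / Δ := by positivity
  have hK0 : (0 : ℝ) < K := hb.trans_le hbK
  have hx1 : Δ / n < 1 := by rw [div_lt_one hn0]; nlinarith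
  have hq := exp_neg_le_one_sub_pow hx1 hKx
  have hnK : (n : ℝ) / K ≤ Δ / M := by
    rw [div_le_iff₀ hK0]
    calc (n : ℝ) = Δ / M * (M * n / Δ) := by field_simp
      _ ≤ Δ / M * K := by gcongr
  have hlog : log (exp 1 * n / K) ≤ 1 + log (Δ / M) := by
    calc log (exp 1 * n / K) ≤ log (exp 1 * (Δ / M)) := by
          gcongr
          rw [mul_div_assoc]; gcongr
      _ = 1 + log (Δ / M) := by rw [log_mul (exp_pos 1).ne' (by positivity), log_exp]
  have hlog0 : 0 ≤ 1 + log (Δ / M) := by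
    have : 0 ≤ log (Δ / M) := log_nonneg (by rw [le_div_iff₀ (by linarith)]; linarith)
    linarith
  have hlogK : 0 ≤ log (exp 1 * n / K) :=
    log_nonneg (by rw [one_le_div hK0]; nlinarith [add_one_le_exp (1 : ℝ)])
  have hKn' : K ≤ n := by exact_mod_cast (hKn.trans (by linarith) : (K : ℝ) ≤ n)
  have hnsub : (n : ℝ) / 2 ≤ (n - K : ℕ) := by rw [Nat.cast_sub hKn']; linarith
  refine (choose_mul_one_sub_pow_pow_le_exp (by exact_mod_cast hK0) hKn'
    (div_nonneg hΔ.le hn0.le) hx1.le hq).trans (exp_le_exp.2 ?_)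
  calc (K : ℝ) * log (exp 1 * n / K) - exp (-(M + 1)) * (n - K : ℕ)
      ≤ 2 * (M * n / Δ) * (1 + log (Δ / M)) - exp (-(M + 1)) * (n / 2) := by
        gcongr
    _ = -firstMomentRate Δ M * n := by rw [firstMomentRate]; ring

-- `72` is where `log L ≤ L / 6` follows from `(L / 6) ^ 2 / 2 ≤ exp (L / 6)`
lemma log_le_div_six {L : ℝ} (hL : 72 ≤ L) : log L ≤ L / 6 := by
  rw [log_le_iff_le_exp (by linarith)]
  have := pow_div_factorial_le_exp (L / 6) (by linarith) 2
  norm_num [Nat.factorial] at this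
  nlinarith

lemma log_sub_three_mul_log_log_bounds {Δ M : ℝ} (hΔ : exp 72 ≤ Δ)
    (hM : M = log Δ - 3 * log (log Δ)) :
    1 ≤ M ∧ 4 * M ≤ Δ ∧ 0 < firstMomentRate Δ M := by
  have hΔ0 : 0 < Δ := (exp_pos 72).trans_le hΔ
  set L := log Δ
  have hL : 72 ≤ L := by simpa using log_le_log (exp_pos 72) hΔ
  have hlogL := log_le_div_six hL
  have hlogL0 : 0 ≤ log L := log_nonneg (by linarith)
  have hLM : L / 2 ≤ M := by linarith
  have hexp : exp L = Δ := exp_log hΔ0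
  have hΔL : L ^ 2 / 2 ≤ Δ := by
    simpa [hexp, Nat.factorial] using pow_div_factorial_le_exp L (by linarith) 2
  have hq : exp (-(M + 1)) = L ^ 3 / (exp 1 * Δ) := by
    rw [hM, show -(L - 3 * log L + 1) = 3 * log L - L - 1 by ring, exp_sub, exp_sub,
      ← log_rpow (by linarith), exp_log (by positivity), hexp, div_div]
    norm_cast
    ring
  have hlogΔM : log (Δ / M) ≤ L := by
    rw [log_div hΔ0.ne' (by linarith)]
    linarith [log_nonneg (by linarith : 1 ≤ M)]
  have he : exp 1 < 3 := by linarith [exp_one_lt_d9]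
  have hMΔ : 4 * M ≤ Δ := by nlinarith
  refine ⟨by linarith, hMΔ, ?_⟩
  have hΔM : 1 ≤ Δ / M := (one_le_div (by linarith)).2 (by linarith)
  have hsmall : 2 * M * (1 + log (Δ / M)) ≤ 4 * L ^ 2 := by
    nlinarith [mul_le_mul (by linarith : 2 * M ≤ 2 * L) (by linarith : 1 + log (Δ / M) ≤ 2 * L)
      (by linarith [log_nonneg hΔM]) (by linarith)]
  have hrate : 2 * M * (1 + log (Δ / M)) < L ^ 3 / (2 * exp 1) := by
    rw [lt_div_iff₀ (by positivity)]
    calc 2 * M * (1 + log (Δ / M)) * (2 * exp 1) ≤ 4 * L ^ 2 * (2 * exp 1) := by gcongr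
      _ < 4 * L ^ 2 * 6 := by gcongr; linarith
      _ ≤ L ^ 3 := by nlinarith [mul_le_mul_of_nonneg_right hL (sq_nonneg L)]
  rw [firstMomentRate, hq, show L ^ 3 / (exp 1 * Δ) / 2 - 2 * M * (1 + log (Δ / M)) / Δ =
    (L ^ 3 / (2 * exp 1) - 2 * M * (1 + log (Δ / M))) / Δ by ring]
  exact div_pos (by linarith) hΔ0

/-- In `G(n,p)` with `p = Δ/n` and `Δ` a sufficiently large constant, with probability
`1 - o(n^{-1/2})` every maximal independent set has size at least
`(log Δ - 3 log log Δ) · n / Δ`. -/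
theorem gnp_maximal_independent_sets_large :
    ∃ Δ₀ : ℝ, ∀ Δ : ℝ, Δ₀ ≤ Δ →
      (fun n : ℕ =>
          ((gnp n (min 1 (ENNReal.ofReal (Δ / n))) (min_le_left _ _))
            {ω | ¬ ∀ I : Finset (Fin n),
              ((∀ u ∈ I, ∀ v ∈ I, ¬ adjOf ω u v) ∧
               (∀ v : Fin n, v ∉ I → ∃ u ∈ I, adjOf ω u v)) →
              (Real.log Δ - 3 * Real.log (Real.log Δ)) * (n : ℝ) / Δ ≤ (I.card : ℝ)}).toReal)
        =o[Filter.atTop] fun n : ℕ => (n : ℝ) ^ (-(1 : ℝ)/2) := by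
  refine ⟨exp 72, fun Δ hΔ => ?_⟩
  set M := log Δ - 3 * log (log Δ) with hM
  obtain ⟨hM1, hMΔ, hrate⟩ := log_sub_three_mul_log_log_bounds hΔ hM
  refine Asymptotics.IsBigO.trans_isLittleO (g := fun n : ℕ => exp (-firstMomentRate Δ M * n)) ?_
    ((isLittleO_exp_neg_mul_rpow_atTop hrate _).comp_tendsto tendsto_natCast_atTop_atTop)
  refine Asymptotics.IsBigO.of_bound 1 ?_
  filter_upwards [Filter.eventually_ge_atTop ⌈Δ * (M + 2)⌉₊] with n hn
  replace hn : Δ * (M + 2) ≤ n := Nat.ceil_le.1 hn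
  obtain ⟨-, -, hKn, -⟩ := ceil_mul_div_bounds hM1 hMΔ hn
  have hΔ0 : 0 ≤ Δ := by linarith
  have hΔn : Δ / n ≤ 1 := div_le_one_of_le₀ (by nlinarith) (Nat.cast_nonneg n)
  rw [Real.norm_of_nonneg ENNReal.toReal_nonneg, Real.norm_of_nonneg (exp_pos _).le, one_mul]
  exact (gnp_not_forall_le_card_toReal_le (by positivity) hΔn
    (by exact_mod_cast (hKn.trans (by linarith) : (⌈M * n / Δ⌉₊ : ℝ) ≤ n))).trans
    (choose_ceil_mul_div_le_exp hM1 hMΔ hn)
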